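/- Under the hypotheses of Lemma 1 with the additional condition g̈ ⋆ g − α·(ḧ ⋆ h) = αβ·δ for some real β (δ the Kronecker delta sequence at 0), one has D̃(z, x) − ‖z‖² = αβ‖x‖² + α(D(y, x) − ‖y‖²) for every finitely supported x. Consequently, if all candidate inputs x have the same energy ‖x‖², then for fixed y (and z = f ⋆ y), a sequence x minimizes D̃(z, x) over the candidate set if and only if it minimizes D(y, x). -/

import Mathlib

open scoped ComplexConjugate

noncomputable def conv (a b : ℤ → ℂ) : ℤ → ℂ := fun n => ∑' m, a m * b (n - m)

noncomputable def ddot (a : ℤ → ℂ) : ℤ → ℂ := fun n => conj (a (-n))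

def HasFinSupp (a : ℤ → ℂ) : Prop := (Function.support a).Finite

/-- Energy `‖u‖² = Σ_n |u_n|²`. -/
noncomputable def energy (u : ℤ → ℂ) : ℝ := ∑' n, Complex.normSq (u n)

/-- `D(y,x) = ‖y − h ⋆ x‖²`. -/
noncomputable def Dcost (h y x : ℤ → ℂ) : ℝ :=
  ∑' n, Complex.normSq (y n - conv h x n)

/-!
With `seqInner u v = Σ conj (u n) * v n`, convolution by a finitely supported `a` has adjoint
convolution by `ddot a`. Expanding `D̃(z, x) = ‖z‖² - 2 Re ⟨z, g ⋆ x⟩ + ‖g ⋆ x‖²`, the cross term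
`⟨f ⋆ y, g ⋆ x⟩ = ⟨(g̈ ⋆ f) ⋆ y, x⟩` becomes `α ⟨y, h ⋆ x⟩`, and the Gram term
`⟨g ⋆ x, g ⋆ x⟩ = ⟨(g̈ ⋆ g) ⋆ x, x⟩` becomes `α ‖h ⋆ x‖² + αβ ‖x‖²`. On candidates of equal energy
`D̃(z, ·)` is therefore a positive affine function of `D(y, ·)`, so both have the same minimizers.
-/

open Function

section Sequences

variable {a b u w : ℤ → ℂ}

noncomputable def seqInner (u v : ℤ → ℂ) : ℂ := ∑' n, conj (u n) * v n

lemma summable_mul_of_hasFinSupp (ha : HasFinSupp a) (b : ℤ → ℂ) :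
    Summable fun n => a n * b n :=
  summable_of_hasFiniteSupport (HasFiniteSupport.fun_mul_left ha b)

lemma summable_conj_mul_of_hasFinSupp (hu : HasFinSupp u) (v : ℤ → ℂ) :
    Summable fun n => conj (u n) * v n :=
  summable_of_hasFiniteSupport <| hu.subset fun n hn => by simpa using left_ne_zero_of_mul hn

lemma hasFinSupp_conv (ha : HasFinSupp a) (hb : HasFinSupp b) : HasFinSupp (conv a b) := by
  refine (ha.add hb).subset fun n hn => ?_
  obtain ⟨m, hm⟩ : ∃ m, a m * b (n - m) ≠ 0 := by
    by_contra! h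
    exact hn (by simp [conv, h])
  exact ⟨m, left_ne_zero_of_mul hm, n - m, right_ne_zero_of_mul hm, add_sub_cancel m n⟩

lemma hasFinSupp_ddot (ha : HasFinSupp a) : HasFinSupp (ddot a) :=
  (ha.preimage neg_injective.injOn).subset fun n hn h0 => hn (by simp [ddot, h0])

lemma conv_assoc (ha : HasFinSupp a) (hb : HasFinSupp b) (c : ℤ → ℂ) :
    conv (conv a b) c = conv a (conv b c) := by
  funext n
  have hfin : HasFiniteSupport (uncurry fun m j => a j * b (m - j) * c (n - m)) := by
    refine ((ha.prod hb).preimage (f := fun p : ℤ × ℤ => (p.2, p.1 - p.2)) ?_).subset ?_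
    · intro p _ q _ hpq
      simp only [Prod.mk.injEq] at hpq
      ext <;> omega
    · intro p hp
      exact ⟨left_ne_zero_of_mul (left_ne_zero_of_mul hp),
        right_ne_zero_of_mul (left_ne_zero_of_mul hp)⟩
  calc conv (conv a b) c n
      = ∑' m, ∑' j, a j * b (m - j) * c (n - m) := by simp only [conv, tsum_mul_right]
    _ = ∑' j, ∑' m, a j * b (m - j) * c (n - m) :=
        (summable_of_hasFiniteSupport hfin).tsum_comm.symm
    _ = ∑' j, ∑' i, a j * b (j + i - j) * c (n - (j + i)) :=
        tsum_congr fun j => ((Equiv.addLeft j).tsum_eq (fun m => a j * b (m - j) * c (n - m))).symm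
    _ = conv a (conv b c) n := by
        simp only [conv, add_sub_cancel_left, sub_add_eq_sub_sub, ← tsum_mul_left, mul_assoc]

lemma conv_smul_left (k : ℂ) (a b : ℤ → ℂ) : conv (k • a) b = k • conv a b := by
  funext n
  simp only [conv, Pi.smul_apply, smul_eq_mul, mul_assoc, tsum_mul_left]

lemma conv_add_left (ha : HasFinSupp a) (hb : HasFinSupp b) (c : ℤ → ℂ) :
    conv (a + b) c = conv a c + conv b c := by
  funext n
  simp only [conv, Pi.add_apply, add_mul]
  exact (summable_mul_of_hasFinSupp ha _).tsum_add (summable_mul_of_hasFinSupp hb _)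

lemma single_zero_one_conv (x : ℤ → ℂ) : conv (Pi.single 0 1) x = x := by
  funext n
  simp [conv, Pi.single_apply]

lemma seqInner_conv_right (ha : HasFinSupp a) (hu : HasFinSupp u) (v : ℤ → ℂ) :
    seqInner u (conv a v) = seqInner (conv (ddot a) u) v := by
  have hfin : HasFiniteSupport (uncurry fun n k => conj (u n) * (a (n - k) * v k)) := by
    refine ((hu.prod ha).preimage (f := fun p : ℤ × ℤ => (p.1, p.1 - p.2)) ?_).subset ?_
    · intro p _ q _ hpq
      simp only [Prod.mk.injEq] at hpq
      ext <;> omega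
    · intro p hp
      exact ⟨by simpa using left_ne_zero_of_mul hp,
        left_ne_zero_of_mul (right_ne_zero_of_mul hp)⟩
  have hconj (k : ℤ) : conj (conv (ddot a) u k) = ∑' n, a (n - k) * conj (u n) := by
    rw [conv, Complex.conj_tsum, ← (Equiv.subLeft k).tsum_eq]
    simp [ddot]
  calc seqInner u (conv a v)
      = ∑' n, ∑' k, conj (u n) * (a (n - k) * v (n - (n - k))) := by
        simp only [seqInner, conv, ← tsum_mul_left]
        exact tsum_congr fun n =>
          ((Equiv.subLeft n).tsum_eq fun m => conj (u n) * (a m * v (n - m))).symm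
    _ = ∑' k, ∑' n, conj (u n) * (a (n - k) * v k) := by
        simp only [sub_sub_cancel]
        exact (summable_of_hasFiniteSupport hfin).tsum_comm.symm
    _ = seqInner (conv (ddot a) u) v := by
        simp only [seqInner, hconj, ← tsum_mul_right]
        exact tsum_congr fun k => tsum_congr fun n => by ring

lemma seqInner_smul_left (k : ℂ) (u v : ℤ → ℂ) : seqInner (k • u) v = conj k * seqInner u v := by
  simp only [seqInner, Pi.smul_apply, smul_eq_mul, map_mul, mul_assoc, tsum_mul_left]

lemma seqInner_add_left (hu : HasFinSupp u) (hw : HasFinSupp w) (v : ℤ → ℂ) :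
    seqInner (u + w) v = seqInner u v + seqInner w v := by
  simp only [seqInner, Pi.add_apply, map_add, add_mul]
  exact (summable_conj_mul_of_hasFinSupp hu v).tsum_add (summable_conj_mul_of_hasFinSupp hw v)

lemma ofReal_energy (u : ℤ → ℂ) : (energy u : ℂ) = seqInner u u := by
  simp only [energy, seqInner, Complex.ofReal_tsum, Complex.normSq_eq_conj_mul_self]

lemma energy_sub (hu : HasFinSupp u) (hw : HasFinSupp w) :
    energy (u - w) = energy u - 2 * (seqInner u w).re + energy w := by
  have hsq {u : ℤ → ℂ} (hu : HasFinSupp u) : Summable fun n => Complex.normSq (u n) :=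
    summable_of_hasFiniteSupport <| hu.subset fun n hn => by simpa using hn
  have hre : (seqInner u w).re = ∑' n, (u n * conj (w n)).re := by
    rw [seqInner, Complex.re_tsum (summable_conj_mul_of_hasFinSupp hu w)]
    exact tsum_congr fun n => by simp [Complex.mul_re]
  simp only [energy, Pi.sub_apply, Complex.normSq_sub]
  have hsre : Summable fun n => (u n * conj (w n)).re :=
    Complex.reCLM.summable (summable_mul_of_hasFinSupp hu _)
  rw [((hsq hu).add (hsq hw)).tsum_sub (hsre.mul_left 2), (hsq hu).tsum_add (hsq hw),
    tsum_mul_left, hre]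
  ring

lemma Dcost_eq_energy_sub (h y x : ℤ → ℂ) : Dcost h y x = energy (y - conv h x) := rfl

end Sequences

lemma forall_le_iff_of_eq_add_mul {ι : Type*} {X : Set ι} {F G : ι → ℝ} {K α : ℝ} (hα : 0 < α)
    (hFG : ∀ x ∈ X, F x = K + α * G x) {x₀ : ι} (hx₀ : x₀ ∈ X) :
    (∀ x ∈ X, F x₀ ≤ F x) ↔ ∀ x ∈ X, G x₀ ≤ G x :=
  forall₂_congr fun x hx => by
    rw [hFG x₀ hx₀, hFG x hx, add_le_add_iff_left, mul_le_mul_iff_right₀ hα]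

theorem Dcost_sub_energy_eq {h f g y x : ℤ → ℂ} (hh : HasFinSupp h) (hf : HasFinSupp f)
    (hg : HasFinSupp g) (hy : HasFinSupp y) (hx : HasFinSupp x) {α β : ℝ}
    (hgf : conv (ddot g) f = (α : ℂ) • ddot h)
    (hgg : conv (ddot g) g = (α : ℂ) • conv (ddot h) h + ((α * β : ℝ) : ℂ) • Pi.single 0 1) :
    Dcost g (conv f y) x - energy (conv f y) = α * β * energy x + α * (Dcost h y x - energy y) := by
  have hz := hasFinSupp_conv hf hy
  have hgx := hasFinSupp_conv hg hx
  have hhx := hasFinSupp_conv hh hx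
  have hcross : seqInner (conv f y) (conv g x) = α * seqInner y (conv h x) := by
    rw [seqInner_conv_right hg hz, ← conv_assoc (hasFinSupp_ddot hg) hf, hgf, conv_smul_left,
      seqInner_smul_left, Complex.conj_ofReal, ← seqInner_conv_right hh hy]
  have hgram : energy (conv g x) = α * energy (conv h x) + α * β * energy x := by
    have hsmul {k : ℂ} {a : ℤ → ℂ} (ha : HasFinSupp a) : HasFinSupp (k • a) :=
      ha.subset (support_const_smul_subset k a)
    have hdelta : HasFinSupp (Pi.single (0 : ℤ) (1 : ℂ)) :=
      (Set.finite_singleton 0).subset Pi.support_single_subset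
    have : seqInner (conv g x) (conv g x)
        = α * seqInner (conv h x) (conv h x) + ((α * β : ℝ) : ℂ) * seqInner x x := by
      rw [seqInner_conv_right hg hgx, ← conv_assoc (hasFinSupp_ddot hg) hg, hgg,
        conv_add_left (hsmul (hasFinSupp_conv (hasFinSupp_ddot hh) hh)) (hsmul hdelta),
        conv_smul_left, conv_smul_left, single_zero_one_conv, conv_assoc (hasFinSupp_ddot hh) hh,
        seqInner_add_left (hsmul (hasFinSupp_conv (hasFinSupp_ddot hh) hhx)) (hsmul hx),
        seqInner_smul_left, seqInner_smul_left, ← seqInner_conv_right hh hhx]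
      simp
    rw [← ofReal_energy, ← ofReal_energy, ← ofReal_energy] at this
    exact_mod_cast this
  rw [Dcost_eq_energy_sub, Dcost_eq_energy_sub, energy_sub hz hgx, energy_sub hy hhx, hcross,
    hgram, Complex.re_ofReal_mul]
  ring

/-- Under the hypotheses of Lemma 1 together with
`g̈ ⋆ g − α (ḧ ⋆ h) = αβ δ`, one has
`D̃(z,x) − ‖z‖² = αβ‖x‖² + α(D(y,x) − ‖y‖²)` for all finitely supported `x`;
consequently, over any finite candidate set of equal-energy inputs,
`x` minimizes `D̃(z,·)` iff it minimizes `D(y,·)`. -/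
theorem equal_energy_equivalence (h f g y : ℤ → ℂ)
    (hh : HasFinSupp h) (hf : HasFinSupp f) (hg : HasFinSupp g)
    (hy : HasFinSupp y)
    (α β : ℝ) (hα : 0 < α)
    (hyp : conv (ddot g) f = fun n => (α : ℂ) * ddot h n)
    (hdelta : (fun n => conv (ddot g) g n - (α : ℂ) * conv (ddot h) h n)
      = fun n => ((α * β : ℝ) : ℂ) * (if n = 0 then 1 else 0)) :
    (∀ x : ℤ → ℂ, HasFinSupp x →
      Dcost g (conv f y) x - energy (conv f y)
        = α * β * energy x + α * (Dcost h y x - energy y)) ∧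
    (∀ (X : Finset (ℤ → ℂ)) (c : ℝ),
      (∀ x' ∈ X, HasFinSupp x') → (∀ x' ∈ X, energy x' = c) →
      ∀ x₀ ∈ X,
        ((∀ x' ∈ X, Dcost g (conv f y) x₀ ≤ Dcost g (conv f y) x') ↔
         (∀ x' ∈ X, Dcost h y x₀ ≤ Dcost h y x'))) := by
  have hgf : conv (ddot g) f = (α : ℂ) • ddot h := hyp
  have hgg : conv (ddot g) g
      = (α : ℂ) • conv (ddot h) h + ((α * β : ℝ) : ℂ) • Pi.single 0 1 := by
    funext n
    simpa [Pi.single_apply, sub_eq_iff_eq_add'] using congrFun hdelta n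
  have key (x : ℤ → ℂ) (hx : HasFinSupp x) :=
    Dcost_sub_energy_eq hh hf hg hy hx hgf hgg
  refine ⟨key, fun X c hXsupp hXenergy x₀ hx₀ => ?_⟩
  refine forall_le_iff_of_eq_add_mul (X := (X : Set (ℤ → ℂ)))
    (K := energy (conv f y) + α * β * c - α * energy y) hα (fun x hx => ?_)
    (Finset.mem_coe.2 hx₀)
  linear_combination key x (hXsupp x hx) + α * β * hXenergy x hx
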